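/- Let r ≥ 1, d ≥ 3, and consider the ideal I := ⟨x_0^{d−1}, …, x_{2r−1}^{d−1}⟩ ⊆ ℂ[x_0, …, x_{2r−1}]. Let β₁, β₂, c₁, c₂ ∈ ℂ∖{0} with β₁ ≠ β₂, and for i = 1, 2 define R_i := c_i · Π_{j=1}^{r} ( Σ_{l=0}^{d−2} x_{2j−2}^{d−2−l} β_i^{l} x_{2j−1}^{l} ) (equivalently R_i = c_i Π_{j=1}^{r} (x_{2j−2}^{d−1} − (β_i x_{2j−1})^{d−1})/(x_{2j−2} − β_i x_{2j−1})). Then for every e ≥ 0 one has (I : R₁)_e ∩ (I : R₂)_e = (I : R₁ + R₂)_e if and only if e ≠ (d−2)·r. -/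

import Mathlib

open MvPolynomial

/-- The colon ideal `(I : P) = {Q : P·Q ∈ I}`. -/
def colonIdeal {A : Type*} [CommRing A] (I : Ideal A) (P : A) : Ideal A where
  carrier := {Q | P * Q ∈ I}
  zero_mem' := by simp
  add_mem' := by
    intro a b ha hb
    simpa [mul_add] using I.add_mem ha hb
  smul_mem' := by
    intro c x hx
    simp only [Set.mem_setOf_eq, smul_eq_mul] at *
    rw [mul_comm c x, ← mul_assoc]
    exact I.mul_mem_right c hx

/-- `J_e`: the set of homogeneous polynomials of degree `e` belonging to `J`. -/
def idealPiece {N : ℕ} (J : Ideal (MvPolynomial (Fin N) ℂ)) (e : ℕ) :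
    Set (MvPolynomial (Fin N) ℂ) :=
  {Q | Q ∈ J ∧ Q.IsHomogeneous e}

/-!
Write `x_j, y_j` for the `j`-th pair of variables, `𝔞 = (X_k ^ (D + 1))` with `D = d - 2`, and
`R_β` for the product of the geometric sums, so that `(x_j - β y_j) R_β ∈ 𝔞` for every `j`.

If `(R₀ + R₁) Q ∈ 𝔞`, subtracting these relations for `β₀ ≠ β₁` shows that every variable
multiplies `R₀ Q` into `𝔞`. Thus `R₀ Q` lies in `𝔞 : 𝔪 = 𝔞 + (∏ X_k ^ D)`, hence in `𝔞` unless its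
degree `D r + e` is the socle degree `2 D r`, i.e. unless `e = D r`.

In degree `e = D r` take `Q = (a x_{j₀} + a' y_{j₀}) M` with `y_{j₀} M = ∏ y_j ^ D`. Modulo `𝔞`,
`R_i Q ≡ (a βᵢ + a') cᵢ ∏ X_k ^ D`, and `a, a'` can be chosen so that the two multiples of the
socle monomial cancel while neither vanishes.
-/

section IdealArithmetic

variable {A : Type*} [CommRing A] {I : Ideal A}

lemma mul_mem_of_sub_mul_mem_of_add_mul_mem {x y b₀ b₁ R₀ R₁ Q : A} (hb : IsUnit (b₀ - b₁))
    (h₀ : (x - b₀ * y) * R₀ ∈ I) (h₁ : (x - b₁ * y) * R₁ ∈ I) (hQ : (R₀ + R₁) * Q ∈ I) :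
    x * (R₀ * Q) ∈ I ∧ y * (R₀ * Q) ∈ I := by
  set π := Ideal.Quotient.mk I
  simp only [← Ideal.Quotient.eq_zero_iff_mem, map_mul, map_sub, map_add] at h₀ h₁ hQ ⊢
  have hy : π (b₀ - b₁) * (π y * (π R₀ * π Q)) = 0 := by
    rw [map_sub]
    linear_combination (π x - π b₁ * π y) * hQ - π Q * h₁ - π Q * h₀
  have hy' := (hb.map π).mul_right_eq_zero.mp hy
  exact ⟨by linear_combination π Q * h₀ + π b₀ * hy', hy'⟩

lemma mul_add_mul_mul_sub_mem {x y M S b c R : A} (a a' : A) (hx : (x - b * y) * R ∈ I)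
    (hS : R * (y * M) - c * S ∈ I) : R * ((a * x + a' * y) * M) - (a * b + a') * c * S ∈ I := by
  rw [show R * ((a * x + a' * y) * M) - (a * b + a') * c * S =
    a * M * ((x - b * y) * R) + (a * b + a') * (R * (y * M) - c * S) by ring]
  exact I.add_mem (I.mul_mem_left _ hx) (I.mul_mem_left _ hS)

end IdealArithmetic

lemma Function.Bijective.prod_mul_comp_sum_elim {ι σ M : Type*} [Fintype ι] [Fintype σ]
    [CommMonoid M] {u v : ι → σ} (huv : (Sum.elim u v).Bijective) (f : σ → M) :
    ∏ j, (f (u j) * f (v j)) = ∏ k, f k := by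
  rw [← huv.prod_comp, Fintype.prod_sum_type, Finset.prod_mul_distrib]
  rfl

lemma Function.Bijective.card_eq_two_mul_of_sum_elim {ι σ : Type*} [Fintype ι] [Fintype σ]
    {u v : ι → σ} (huv : (Sum.elim u v).Bijective) :
    Fintype.card σ = 2 * Fintype.card ι := by
  rw [← Fintype.card_congr (Equiv.ofBijective _ huv), Fintype.card_sum, two_mul]

namespace MvPolynomial

noncomputable def varPowIdeal (σ R : Type*) [CommSemiring R] (n : ℕ) :
    Ideal (MvPolynomial σ R) :=
  Ideal.span (Set.range fun k => X k ^ n)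

section VarPowIdeal

variable {σ R : Type*} [CommSemiring R]

lemma mem_varPowIdeal_iff {P : MvPolynomial σ R} {n : ℕ} :
    P ∈ varPowIdeal σ R n ↔ ∀ a ∈ P.support, ∃ k, n ≤ a k := by
  have hgen : (Set.range fun k => (X k : MvPolynomial σ R) ^ n) =
      (fun s => monomial s (1 : R)) '' Set.range fun k => Finsupp.single k n := by
    rw [← Set.range_comp]
    simp only [Function.comp_def, X_pow_eq_monomial]
  simp [varPowIdeal, hgen, mem_ideal_span_monomial_image, Finsupp.single_le_iff]

lemma X_pow_mem_varPowIdeal (k : σ) (n : ℕ) : X k ^ n ∈ varPowIdeal σ R n :=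
  Ideal.subset_span ⟨k, rfl⟩

variable [Fintype σ]

lemma C_mul_prod_X_pow_notMem_varPowIdeal {a : R} (ha : a ≠ 0) (D : ℕ) :
    C a * ∏ k, X k ^ D ∉ varPowIdeal σ R (D + 1) := by
  classical
  have hmon : C a * ∏ k, (X k : MvPolynomial σ R) ^ D =
      monomial (∑ k, Finsupp.single k D) a := by
    simp only [monomial_sum_index, X_pow_eq_monomial]
  rw [hmon, mem_varPowIdeal_iff]
  intro h
  obtain ⟨k, hk⟩ := h (∑ k, Finsupp.single k D) (by simp [support_monomial, ha])
  simp [Finsupp.finsetSum_apply, Finsupp.single_apply] at hk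

/-- Away from the degree of the socle monomial `∏ k, X k ^ D`, the ideal
`varPowIdeal σ R (D + 1)` is saturated with respect to the irrelevant ideal. -/
lemma mem_varPowIdeal_of_forall_X_mul_mem {P : MvPolynomial σ R} {D e : ℕ}
    (hP : P.IsHomogeneous e) (he : e ≠ D * Fintype.card σ)
    (hX : ∀ k, X k * P ∈ varPowIdeal σ R (D + 1)) : P ∈ varPowIdeal σ R (D + 1) := by
  classical
  rw [mem_varPowIdeal_iff]
  intro a ha
  by_contra! ha_small
  obtain ⟨k, hk⟩ : ∃ k, a k < D := by
    by_contra! ha_full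
    refine mem_support_iff.mp ha (hP.coeff_eq_zero ?_)
    have : a = Finsupp.equivFunOnFinite.symm fun _ => D :=
      Finsupp.ext fun k => le_antisymm (Nat.lt_succ_iff.mp (ha_small k)) (ha_full k)
    simp [this, Finsupp.degree_eq_sum, he.symm, mul_comm]
  obtain ⟨k', hk'⟩ := mem_varPowIdeal_iff.mp (hX k) (Finsupp.single k 1 + a) (by simpa using ha)
  have := ha_small k'
  rw [Finsupp.add_apply, Finsupp.single_apply] at hk'
  split_ifs at hk' with hkk
  · subst hkk; omega
  · omega

end VarPowIdeal

section PairGeomSum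

variable {σ ι R : Type*} [CommRing R] (D : ℕ) (β : R)

noncomputable def pairGeomSum (x y : σ) : MvPolynomial σ R :=
  ∑ l ∈ Finset.range (D + 1), X x ^ (D - l) * C (β ^ l) * X y ^ l

lemma sub_mul_pairGeomSum_mem (x y : σ) :
    (X x - C β * X y) * pairGeomSum D β x y ∈ varPowIdeal σ R (D + 1) := by
  have hsum : pairGeomSum D β x y =
      ∑ l ∈ Finset.range (D + 1), (C β * X y) ^ l * X x ^ (D + 1 - 1 - l) :=
    Finset.sum_congr rfl fun l _ => by
      rw [mul_pow, ← map_pow, add_tsub_cancel_right]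
      ring
  have hfactor : (X x - C β * X y) * pairGeomSum D β x y =
      X x ^ (D + 1) - C (β ^ (D + 1)) * X y ^ (D + 1) := by
    rw [hsum, map_pow]
    linear_combination -geom_sum₂_mul (C β * X y) (X x) (D + 1)
  rw [hfactor]
  exact sub_mem (X_pow_mem_varPowIdeal x _) (Ideal.mul_mem_left _ _ (X_pow_mem_varPowIdeal y _))

lemma pairGeomSum_mul_X_pow_sub_mem (x y : σ) :
    pairGeomSum D β x y * X y ^ D - X x ^ D * X y ^ D ∈ varPowIdeal σ R (D + 1) := by
  rw [pairGeomSum, Finset.sum_range_succ', add_mul]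
  simp only [pow_zero, map_one, mul_one, tsub_zero, add_sub_cancel_right, Finset.sum_mul]
  refine Ideal.sum_mem _ fun l _ => ?_
  rw [show X x ^ (D - (l + 1)) * C (β ^ (l + 1)) * X y ^ (l + 1) * X y ^ D =
    (X x ^ (D - (l + 1)) * C (β ^ (l + 1)) * X y ^ l) * X y ^ (D + 1) by ring]
  exact Ideal.mul_mem_left _ _ (X_pow_mem_varPowIdeal y _)

lemma isHomogeneous_pairGeomSum (x y : σ) : (pairGeomSum D β x y).IsHomogeneous D := by
  refine IsHomogeneous.sum _ _ _ fun l hl => ?_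
  have hl : l ≤ D := Nat.lt_succ_iff.mp (Finset.mem_range.mp hl)
  simpa [Nat.sub_add_cancel hl] using
    ((isHomogeneous_X_pow x (D - l)).mul (isHomogeneous_C _ (β ^ l))).mul
      (isHomogeneous_X_pow y l)

variable [Fintype ι] (c : R) (u v : ι → σ)

noncomputable def pairGeomProd : MvPolynomial σ R :=
  C c * ∏ j, pairGeomSum D β (u j) (v j)

lemma sub_mul_pairGeomProd_mem (j : ι) :
    (X (u j) - C β * X (v j)) * pairGeomProd D β c u v ∈ varPowIdeal σ R (D + 1) :=
  Ideal.mem_of_dvd _ (mul_dvd_mul_left _ (dvd_mul_of_dvd_right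
    (Finset.dvd_prod_of_mem _ (Finset.mem_univ j)) _)) (sub_mul_pairGeomSum_mem D β (u j) (v j))

lemma pairGeomProd_mul_prod_X_pow_sub_mem :
    pairGeomProd D β c u v * ∏ j, X (v j) ^ D - C c * ∏ j, (X (u j) ^ D * X (v j) ^ D) ∈
      varPowIdeal σ R (D + 1) := by
  rw [← Ideal.Quotient.mk_eq_mk_iff_sub_mem, pairGeomProd, mul_assoc, ← Finset.prod_mul_distrib]
  simp only [map_mul, map_prod]
  congr 1
  refine Finset.prod_congr rfl fun j _ => ?_
  rw [← map_mul, ← map_mul, Ideal.Quotient.mk_eq_mk_iff_sub_mem]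
  exact pairGeomSum_mul_X_pow_sub_mem D β (u j) (v j)

lemma isHomogeneous_pairGeomProd :
    (pairGeomProd D β c u v).IsHomogeneous (D * Fintype.card ι) := by
  have := (isHomogeneous_C σ c).mul (IsHomogeneous.prod Finset.univ _ (fun _ => D)
    fun j _ => isHomogeneous_pairGeomSum D β (u j) (v j))
  rwa [Finset.sum_const, Finset.card_univ, smul_eq_mul, zero_add, Nat.mul_comm] at this

end PairGeomSum

lemma exists_X_mul_eq_prod_X_pow {σ ι R : Type*} [CommSemiring R] [Fintype ι] (v : ι → σ)
    {D : ℕ} (hD : 1 ≤ D) (j₀ : ι) :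
    ∃ M : MvPolynomial σ R, M.IsHomogeneous (D * Fintype.card ι - 1) ∧
      X (v j₀) * M = ∏ j, X (v j) ^ D := by
  classical
  refine ⟨X (v j₀) ^ (D - 1) * ∏ j ∈ Finset.univ.erase j₀, X (v j) ^ D, ?_, ?_⟩
  · convert (isHomogeneous_X_pow _ _).mul
      (IsHomogeneous.prod _ _ (fun _ => D) fun j _ => isHomogeneous_X_pow (R := R) (v j) D)
      using 1
    rw [Finset.sum_const, Finset.card_erase_of_mem (Finset.mem_univ j₀), Finset.card_univ,
      smul_eq_mul]
    have hι : 1 ≤ Fintype.card ι := Fintype.card_pos_iff.mpr ⟨j₀⟩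
    zify [hD, hι, Nat.mul_le_mul hD hι]
    ring
  · rw [← Finset.mul_prod_erase _ _ (Finset.mem_univ j₀), ← mul_assoc, ← pow_succ',
      Nat.sub_add_cancel hD]

section Colon

variable {σ ι K : Type*} [CommRing K] [Fintype σ] [Fintype ι] {D : ℕ} {u v : ι → σ}

theorem mul_pairGeomProd_mem_of_add_mul_mem (huv : (Sum.elim u v).Bijective)
    {β₀ β₁ c₀ c₁ : K} (hβ : IsUnit (β₀ - β₁)) {Q : MvPolynomial σ K} {e : ℕ}
    (hQ : Q.IsHomogeneous e) (he : e ≠ D * Fintype.card ι)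
    (hsum : (pairGeomProd D β₀ c₀ u v + pairGeomProd D β₁ c₁ u v) * Q ∈
      varPowIdeal σ K (D + 1)) :
    pairGeomProd D β₀ c₀ u v * Q ∈ varPowIdeal σ K (D + 1) := by
  have hb : IsUnit (C β₀ - C β₁ : MvPolynomial σ K) := by
    rw [← map_sub]
    exact hβ.map C
  refine mem_varPowIdeal_of_forall_X_mul_mem ((isHomogeneous_pairGeomProd D β₀ c₀ u v).mul hQ)
    ?_ fun k => ?_
  · rw [huv.card_eq_two_mul_of_sum_elim]
    exact fun h => he (by linarith)
  have hvar (j : ι) := mul_mem_of_sub_mul_mem_of_add_mul_mem hb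
    (sub_mul_pairGeomProd_mem D β₀ c₀ u v j) (sub_mul_pairGeomProd_mem D β₁ c₁ u v j) hsum
  obtain ⟨j | j, rfl⟩ := huv.2 k
  exacts [(hvar j).1, (hvar j).2]

lemma pairGeomProd_mul_sub_socle_mem {j₀ : ι} {M : MvPolynomial σ K}
    (hM : X (v j₀) * M = ∏ j, X (v j) ^ D) (huv : (Sum.elim u v).Bijective) (a a' β c : K) :
    pairGeomProd D β c u v * ((C a * X (u j₀) + C a' * X (v j₀)) * M) -
      C ((a * β + a') * c) * ∏ k, X k ^ D ∈ varPowIdeal σ K (D + 1) := by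
  have := mul_add_mul_mul_sub_mem (C a) (C a') (sub_mul_pairGeomProd_mem D β c u v j₀)
    (hM ▸ pairGeomProd_mul_prod_X_pow_sub_mem D β c u v)
  rwa [huv.prod_mul_comp_sum_elim (fun k => X k ^ D), ← map_mul, ← map_add, ← map_mul] at this

theorem exists_isHomogeneous_add_pairGeomProd_mul_mem_mul_notMem [NoZeroDivisors K] [Nonempty ι]
    (huv : (Sum.elim u v).Bijective) (hD : 1 ≤ D) {β₀ β₁ c₀ c₁ : K} (hβ : β₀ ≠ β₁)
    (hc₀ : c₀ ≠ 0) (hc₁ : c₁ ≠ 0) :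
    ∃ Q : MvPolynomial σ K, Q.IsHomogeneous (D * Fintype.card ι) ∧
      (pairGeomProd D β₀ c₀ u v + pairGeomProd D β₁ c₁ u v) * Q ∈ varPowIdeal σ K (D + 1) ∧
      pairGeomProd D β₀ c₀ u v * Q ∉ varPowIdeal σ K (D + 1) := by
  obtain ⟨j₀⟩ := ‹Nonempty ι›
  obtain ⟨M, hM_hom, hM⟩ := exists_X_mul_eq_prod_X_pow (R := K) v hD j₀
  -- The two socle coefficients `(a * βᵢ + a') * cᵢ` are `± c₀ * c₁ * (β₀ - β₁)`.
  set a := c₀ + c₁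
  set a' := -(c₀ * β₀ + c₁ * β₁)
  have hsocle := pairGeomProd_mul_sub_socle_mem hM huv a a'
  set S : MvPolynomial σ K := ∏ k, X k ^ D
  refine ⟨(C a * X (u j₀) + C a' * X (v j₀)) * M, ?_, ?_, fun h => ?_⟩
  · have hD_card : 1 ≤ D * Fintype.card ι := Nat.mul_le_mul hD Fintype.card_pos
    rw [← Nat.add_sub_cancel' hD_card]
    exact ((isHomogeneous_C_mul_X _ _).add (isHomogeneous_C_mul_X _ _)).mul hM_hom
  · have hcancel :
        C ((a * β₀ + a') * c₀) + C ((a * β₁ + a') * c₁) = (0 : MvPolynomial σ K) := by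
      rw [← map_add, ← map_zero C]
      congr 1
      ring
    convert add_mem (hsocle β₀ c₀) (hsocle β₁ c₁) using 1
    linear_combination S * hcancel
  · have hk : (a * β₀ + a') * c₀ ≠ 0 := by
      rw [show (a * β₀ + a') * c₀ = c₀ * c₁ * (β₀ - β₁) by ring]
      exact mul_ne_zero (mul_ne_zero hc₀ hc₁) (sub_ne_zero.mpr hβ)
    exact C_mul_prod_X_pow_notMem_varPowIdeal hk D (by simpa using sub_mem h (hsocle β₀ c₀))

end Colon

end MvPolynomial

lemma mem_colonIdeal {A : Type*} [CommRing A] {I : Ideal A} {P Q : A} :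
    Q ∈ colonIdeal I P ↔ P * Q ∈ I :=
  Iff.rfl

lemma idealPiece_colonIdeal_inter_eq_iff {N : ℕ} (J : Ideal (MvPolynomial (Fin N) ℂ))
    (P P' : MvPolynomial (Fin N) ℂ) (e : ℕ) :
    idealPiece (colonIdeal J P) e ∩ idealPiece (colonIdeal J P') e =
        idealPiece (colonIdeal J (P + P')) e ↔
      ∀ Q : MvPolynomial (Fin N) ℂ, Q.IsHomogeneous e → (P + P') * Q ∈ J →
        P * Q ∈ J ∧ P' * Q ∈ J := by
  constructor
  · intro h Q hQ hsum
    obtain ⟨⟨hP, -⟩, hP', -⟩ :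
        Q ∈ idealPiece (colonIdeal J P) e ∩ idealPiece (colonIdeal J P') e := h ▸ ⟨hsum, hQ⟩
    exact ⟨hP, hP'⟩
  · intro h
    ext Q
    constructor
    · rintro ⟨⟨hP, hQ⟩, hP', -⟩
      refine ⟨?_, hQ⟩
      rw [mem_colonIdeal, add_mul]
      exact J.add_mem hP hP'
    · rintro ⟨hsum, hQ⟩
      obtain ⟨hP, hP'⟩ := h Q hQ hsum
      exact ⟨⟨hP, hQ⟩, hP', hQ⟩

lemma bijective_sum_elim_fin_two_mul (r : ℕ) :
    (Sum.elim (fun j : Fin r => (⟨2 * j, by have := j.isLt; omega⟩ : Fin (2 * r)))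
      (fun j : Fin r => ⟨2 * j + 1, by have := j.isLt; omega⟩)).Bijective := by
  refine ⟨?_, fun k => ?_⟩
  · rintro (j | j) (j' | j') h <;> simp [Fin.ext_iff] at h ⊢ <;> omega
  · obtain ⟨j, hj | hj⟩ := Nat.even_or_odd' (k : ℕ)
    · exact ⟨Sum.inl ⟨j, by omega⟩, Fin.ext hj.symm⟩
    · exact ⟨Sum.inr ⟨j, by omega⟩, Fin.ext hj.symm⟩

theorem colon_pieces_inter_eq_iff (r d : ℕ) (hr : 1 ≤ r) (hd : 3 ≤ d)
    (β c : Fin 2 → ℂ) (hc : ∀ i, c i ≠ 0) (hββ : β 0 ≠ β 1)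
    (I : Ideal (MvPolynomial (Fin (2 * r)) ℂ))
    (hI : I = Ideal.span (Set.range fun k : Fin (2 * r) => (X k : MvPolynomial (Fin (2 * r)) ℂ) ^ (d - 1)))
    (R : Fin 2 → MvPolynomial (Fin (2 * r)) ℂ)
    (hR : ∀ i, R i = C (c i) *
      ∏ j : Fin r, ∑ l ∈ Finset.range (d - 1),
        (X (⟨2 * (j : ℕ), by have := j.isLt; omega⟩ : Fin (2 * r))) ^ (d - 2 - l) *
          C (β i ^ l) *
          (X (⟨2 * (j : ℕ) + 1, by have := j.isLt; omega⟩ : Fin (2 * r))) ^ l) :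
    ∀ e : ℕ,
      idealPiece (colonIdeal I (R 0)) e ∩ idealPiece (colonIdeal I (R 1)) e =
          idealPiece (colonIdeal I (R 0 + R 1)) e ↔
        e ≠ (d - 2) * r := by
  intro e
  obtain ⟨D, rfl⟩ : ∃ D, d = D + 2 := ⟨d - 2, by omega⟩
  have huv := bijective_sum_elim_fin_two_mul r
  have hI' : I = varPowIdeal _ ℂ (D + 1) := hI
  have hR' : ∀ i, R i = pairGeomProd D (β i) (c i) _ _ := hR
  have : Nonempty (Fin r) := ⟨⟨0, hr⟩⟩
  rw [idealPiece_colonIdeal_inter_eq_iff, hI', hR', hR', Nat.add_sub_cancel]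
  constructor
  · rintro hsplit rfl
    obtain ⟨Q, hQ, hsum, hnot⟩ := exists_isHomogeneous_add_pairGeomProd_mul_mem_mul_notMem
      (D := D) huv (by omega) hββ (hc 0) (hc 1)
    rw [Fintype.card_fin] at hQ
    exact hnot (hsplit Q hQ hsum).1
  · intro he Q hQ hsum
    rw [← Fintype.card_fin r] at he
    refine ⟨mul_pairGeomProd_mem_of_add_mul_mem huv (sub_ne_zero.mpr hββ).isUnit hQ he hsum, ?_⟩
    rw [add_comm (pairGeomProd _ _ _ _ _)] at hsum
    exact mul_pairGeomProd_mem_of_add_mul_mem huv (sub_ne_zero.mpr hββ.symm).isUnit hQ he hsum
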